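/- arXiv:1701.02420 — 2 statements merged into one kernel-verified Lean document; each statement's English description precedes it below -/
import Mathlib

section
/- Let (γ_k)_{k≥0} be a sequence of real numbers, let T be a linear operator on ℝ[x] satisfying T[P_k] = γ_k·P_k for all k, and suppose (S_k)_{k≥0} is a sequence of real polynomials such that T[p] = Σ_{k≥0} S_k(x)·p^{(k)}(x) for every p ∈ ℝ[x]. Then S_{2m+1}(0) = 0 for every natural number m. -/
/-!
Legendre polynomials have parity: `P_n(-x) = (-1)^n P_n(x)`, hence `P_n^{(k)}(0) = 0` whenever
`n + k` is odd. Evaluating `T[P_n] = γ_n P_n` at `0` for `n = 2m + 1` kills the left side, and on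
the right only the terms `S_k(0) P_n^{(k)}(0)` with `k` odd survive. By strong induction on `m`
all of these vanish except `S_n(0) P_n^{(n)}(0)`, and `P_n^{(n)}` is the nonzero constant
`n!` times the leading coefficient of `P_n`.
-/

open Polynomial Finset

noncomputable def legendreP (k : ℕ) : Polynomial ℝ :=
  (1 / (2 ^ k * (Nat.factorial k) : ℝ)) • (Polynomial.derivative^[k] ((X ^ 2 - 1) ^ k))

namespace Polynomial

theorem eval_zero_iterate_derivative_self {R : Type*} [Semiring R] (p : R[X]) (n : ℕ) :
    eval 0 (derivative^[n] p) = n.factorial * p.coeff n := by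
  rw [← coeff_zero_eq_eval_zero, coeff_iterate_derivative, zero_add, Nat.descFactorial_self,
    nsmul_eq_mul]

section CommRing

variable {R : Type*} [CommRing R]

theorem iterate_derivative_comp_neg_X (p : R[X]) (k : ℕ) :
    derivative^[k] (p.comp (-X)) = (-1) ^ k * (derivative^[k] p).comp (-X) := by
  induction k generalizing p with
  | zero => simp
  | succ k ih => simp [ih (derivative p), derivative_comp, pow_succ]

theorem iterate_derivative_comp_neg_X_of_comp_neg_X {p : R[X]} {n : ℕ}
    (hp : p.comp (-X) = (-1) ^ n * p) (k : ℕ) :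
    (derivative^[k] p).comp (-X) = (-1) ^ (n + k) * derivative^[k] p := by
  have h := iterate_derivative_comp_neg_X p k
  rw [hp, show (-1 : R[X]) ^ n = C ((-1) ^ n) by simp, iterate_derivative_C_mul, C_pow, C_neg,
    C_1] at h
  have hk : ((-1 : R[X]) ^ k) * (-1) ^ k = 1 := by rw [← mul_pow]; simp
  linear_combination (-(-1 : R[X]) ^ k) * h - (derivative^[k] p).comp (-X) * hk

theorem eval_zero_eq_zero_of_comp_neg_X_eq_neg [IsAddTorsionFree R] {p : R[X]}
    (hp : p.comp (-X) = -p) : eval 0 p = 0 := by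
  have h := congrArg (eval 0) hp
  rw [eval_comp, eval_neg, eval_X, neg_zero, eval_neg] at h
  exact self_eq_neg.mp h

theorem eval_zero_iterate_derivative_eq_zero [IsAddTorsionFree R] {p : R[X]} {n k : ℕ}
    (hp : p.comp (-X) = (-1) ^ n * p) (hnk : Odd (n + k)) : eval 0 (derivative^[k] p) = 0 :=
  eval_zero_eq_zero_of_comp_neg_X_eq_neg <| by
    rw [iterate_derivative_comp_neg_X_of_comp_neg_X hp, hnk.neg_one_pow, neg_one_mul]

theorem monic_X_sq_sub_one : (X ^ 2 - 1 : R[X]).Monic := by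
  simpa using monic_X_pow_sub_C (1 : R) two_ne_zero

theorem natDegree_X_sq_sub_one_pow [Nontrivial R] (n : ℕ) :
    ((X ^ 2 - 1 : R[X]) ^ n).natDegree = 2 * n := by
  rw [monic_X_sq_sub_one.natDegree_pow, ← C_1, natDegree_X_pow_sub_C, mul_comm]

end CommRing

end Polynomial

theorem legendreP_comp_neg_X (n : ℕ) : (legendreP n).comp (-X) = (-1) ^ n * legendreP n := by
  have h := iterate_derivative_comp_neg_X_of_comp_neg_X (p := (X ^ 2 - 1 : ℝ[X]) ^ n) (n := 0)
    (by simp) n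
  rw [legendreP, smul_comp, h, zero_add, mul_smul_comm]

theorem coeff_legendreP_self (n : ℕ) :
    (legendreP n).coeff n = (2 * n).descFactorial n / (2 ^ n * n.factorial) := by
  rw [legendreP, coeff_smul, coeff_iterate_derivative, ← two_mul,
    ← natDegree_X_sq_sub_one_pow (R := ℝ), (monic_X_sq_sub_one.pow n).coeff_natDegree]
  simp [div_eq_inv_mul]

theorem coeff_legendreP_self_ne_zero (n : ℕ) : (legendreP n).coeff n ≠ 0 := by
  rw [coeff_legendreP_self]
  have : (2 * n).descFactorial n ≠ 0 := by
    rw [Ne, Nat.descFactorial_eq_zero_iff_lt]; omega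
  positivity

theorem natDegree_legendreP (n : ℕ) : (legendreP n).natDegree = n := by
  refine le_antisymm ?_ (le_natDegree_of_ne_zero (coeff_legendreP_self_ne_zero n))
  calc (legendreP n).natDegree
      ≤ (derivative^[n] ((X ^ 2 - 1 : ℝ[X]) ^ n)).natDegree := natDegree_smul_le _ _
    _ ≤ ((X ^ 2 - 1 : ℝ[X]) ^ n).natDegree - n := natDegree_iterate_derivative _ _
    _ = n := by rw [natDegree_X_sq_sub_one_pow]; omega

theorem eval_zero_iterate_derivative_legendreP_self_ne_zero (n : ℕ) :
    eval 0 (derivative^[n] (legendreP n)) ≠ 0 := by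
  rw [eval_zero_iterate_derivative_self]
  exact mul_ne_zero (by positivity) (coeff_legendreP_self_ne_zero n)

theorem stmt1 (γ : ℕ → ℝ) (T : Polynomial ℝ →ₗ[ℝ] Polynomial ℝ)
    (hTP : ∀ k : ℕ, T (legendreP k) = γ k • legendreP k)
    (S : ℕ → Polynomial ℝ)
    (hT : ∀ p : Polynomial ℝ,
      T p = ∑ k ∈ Finset.range (p.natDegree + 1), S k * (Polynomial.derivative)^[k] p)
    (m : ℕ) :
    (S (2 * m + 1)).eval 0 = 0 := by
  induction m using Nat.strong_induction_on with
  | _ m ih =>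
    set n := 2 * m + 1
    have hvanish : ∀ k, Odd (n + k) → eval 0 (derivative^[k] (legendreP n)) = 0 :=
      fun k => eval_zero_iterate_derivative_eq_zero (legendreP_comp_neg_X n)
    have hP : eval 0 (legendreP n) = 0 := hvanish 0 ⟨m, rfl⟩
    have h := congrArg (eval 0) (hT (legendreP n))
    rw [hTP, eval_smul, hP, smul_zero, natDegree_legendreP, eval_finsetSum,
      sum_eq_single n ?_ (by simp), eval_mul] at h
    · exact (mul_eq_zero.mp h.symm).resolve_right
        (eval_zero_iterate_derivative_legendreP_self_ne_zero n)
    · intro k hk hkn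
      rw [eval_mul]
      rcases Nat.even_or_odd k with ⟨j, rfl⟩ | ⟨j, rfl⟩
      · rw [hvanish _ ⟨m + j, by omega⟩, mul_zero]
      · rw [ih j (by rw [mem_range] at hk; omega), zero_mul]
end

section
/- Let n be a positive integer and let A be a real number with −(n+1) ≤ A ≤ n(n+1). Then the linear operator on ℝ[x] given by q ↦ (x²−1)·q″ + 2(n+1)·x·q′ + (n² + n − A)·q maps every hyperbolic polynomial to a hyperbolic polynomial. -/
/-!
Write `T = (x² - 1) D² + 2μ x D + κ` with `μ > 0` and `0 ≤ κ ≤ μ²`. Polynomials of degree at most one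
are trivially hyperbolic, and `T` does not raise the degree, so let `p` be real-rooted of degree
`d ≥ 2` and `Im z < 0`. Then `Q = p(X + z)` has all its roots on the line `Im = b := -Im z > 0`, and
`d (d - 1) (T p)(z)` is a linear form in `Q(0), Q'(0), Q''(0)` whose coefficients depend on `deg Q`.
The polar derivative `m Q - X Q'` of a polynomial of degree `m` keeps the roots in the half-plane
`Im ≥ b` (Laguerre) and lowers the degree by one, multiplying the form by `m - 2`. This reduces
everything to degree two, where the form is `2 lc(Q) (κ x y + μ d w (x + y) + d (d - 1) (w² - 1))`
with `w = -z` and `x, y` the roots of `Q`, and this symmetric bilinear expression has no zero with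
`Im x, Im y ≥ Im w > 0`.
-/

open Polynomial Finset

/-- A real polynomial is hyperbolic if it is zero or all of its complex roots are real. -/
def Hyperbolic (p : Polynomial ℝ) : Prop :=
  p = 0 ∨ ∀ z : ℂ, Polynomial.aeval z p = 0 → z.im = 0

open Complex ComplexConjugate

noncomputable def polarDeriv {R : Type*} [CommRing R] (Q : R[X]) : R[X] :=
  C (Q.natDegree : R) * Q - X * derivative Q

noncomputable def lowCoeffForm {R : Type*} [CommRing R] (Λ M N : R) (Q : R[X]) : R :=
  Q.natDegree * (Q.natDegree - 1) * Λ * Q.coeff 0 - 2 * (Q.natDegree - 1) * M * Q.coeff 1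
    + 2 * N * Q.coeff 2

noncomputable def gegenbauerOp (μ κ : ℝ) (p : ℝ[X]) : ℝ[X] :=
  (X ^ 2 - 1) * derivative (derivative p) + C (2 * μ) * X * derivative p + C κ * p

section PolarDeriv

variable {R : Type*} [CommRing R]

theorem coeff_polarDeriv (Q : R[X]) (k : ℕ) :
    (polarDeriv Q).coeff k = ((Q.natDegree : R) - k) * Q.coeff k := by
  rcases k with _ | k
  · simp [polarDeriv, mul_coeff_zero]
  · rw [polarDeriv, coeff_sub, coeff_C_mul, coeff_X_mul, coeff_derivative]
    push_cast
    ring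

theorem natDegree_polarDeriv {Q : R[X]} {m : ℕ} (hQ : Q.natDegree = m + 1)
    (hm : Q.coeff m ≠ 0) : (polarDeriv Q).natDegree = m := by
  apply natDegree_eq_of_le_of_coeff_ne_zero
  · rw [natDegree_le_iff_coeff_eq_zero]
    intro k hk
    rw [coeff_polarDeriv]
    rcases (Nat.succ_le_of_lt hk).eq_or_lt with rfl | hlt
    · simp [hQ]
    · rw [coeff_eq_zero_of_natDegree_lt (hQ ▸ hlt), mul_zero]
  · rw [coeff_polarDeriv, hQ]
    push_cast
    simpa using hm

theorem lowCoeffForm_polarDeriv (Λ M N : R) {Q : R[X]} {m : ℕ} (hQ : Q.natDegree = m + 1)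
    (hm : Q.coeff m ≠ 0) :
    lowCoeffForm Λ M N (polarDeriv Q) = (m - 1) * lowCoeffForm Λ M N Q := by
  simp only [lowCoeffForm, natDegree_polarDeriv hQ hm, coeff_polarDeriv, hQ]
  push_cast
  ring

theorem lowCoeffForm_of_roots_eq_pair [IsDomain R] (Λ M N : R) {Q : R[X]} {x y : R}
    (hQ : Q.natDegree = 2) (hroots : Q.roots = {x, y}) :
    lowCoeffForm Λ M N Q = 2 * Q.leadingCoeff * (Λ * x * y + M * (x + y) + N) := by
  have hfac := C_leadingCoeff_mul_prod_multiset_X_sub_C (p := Q) (by simp [hroots, hQ])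
  rw [hroots] at hfac
  simp only [Multiset.insert_eq_cons, Multiset.map_cons, Multiset.map_singleton,
    Multiset.prod_cons, Multiset.prod_singleton] at hfac
  have h0 : Q.coeff 0 = Q.leadingCoeff * (x * y) := by
    rw [← hfac]; simp [mul_coeff_zero]
  have h1 : Q.coeff 1 = -Q.leadingCoeff * (x + y) := by
    rw [← hfac]; simp [coeff_C_mul, coeff_X_sub_C_mul]; ring
  have h2 : Q.coeff 2 = Q.leadingCoeff := by
    rw [← hfac]; simp [coeff_C_mul, coeff_X_sub_C_mul, coeff_X]
  rw [lowCoeffForm, hQ, h0, h1, h2]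
  push_cast
  ring

theorem lowCoeffForm_taylor (Λ M N z : R) (P : R[X]) :
    lowCoeffForm Λ M N (taylor z P) = P.natDegree * (P.natDegree - 1) * Λ * P.eval z
      - 2 * (P.natDegree - 1) * M * (derivative P).eval z
      + N * (derivative (derivative P)).eval z := by
  have h2 : 2 * (taylor z P).coeff 2 = (derivative (derivative P)).eval z := by
    have := congrArg (eval z) (congrFun (factorial_smul_hasseDeriv (R := R) (k := 2)) P)
    simp only [Function.iterate_succ, Function.iterate_zero, Function.comp_apply, id,
      Nat.factorial, nsmul_eq_mul] at this
    rw [taylor_coeff, ← this]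
    norm_num
  rw [lowCoeffForm, natDegree_taylor, taylor_coeff_zero, taylor_coeff_one, ← h2]
  ring

end PolarDeriv

section Laguerre

theorem le_re_mul_div_sub {b : ℝ} {w ψ : ℂ} (hw : w.im ≤ b) (hψ : b ≤ ψ.im) (hne : w ≠ ψ) :
    b ≤ ((w.im - 2 * b - w.re * I) * (ψ / (w - ψ))).re := by
  have hpos : 0 < normSq (w - ψ) := normSq_pos.2 (sub_ne_zero.2 hne)
  have key : ((w.im - 2 * b - w.re * I) * (ψ / (w - ψ))).re
      = b + ((b - w.im) * normSq ψ + normSq w * (ψ.im - b)) / normSq (w - ψ) := by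
    rw [div_eq_mul_inv, inv_def, ← mul_assoc, ← mul_assoc, re_mul_ofReal]
    field_simp
    simp only [mul_re, mul_im, sub_re, sub_im, ofReal_re, ofReal_im, I_re, I_im, conj_re,
      conj_im, normSq_apply, re_ofNat, im_ofNat]
    ring
  have : 0 ≤ ((b - w.im) * normSq ψ + normSq w * (ψ.im - b)) / normSq (w - ψ) := by
    apply div_nonneg _ hpos.le
    nlinarith [normSq_nonneg ψ, normSq_nonneg w]
  linarith

theorem sum_div_sub_eq_zero_of_isRoot_polarDeriv {Q : ℂ[X]} {w : ℂ} (hQw : Q.eval w ≠ 0)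
    (hw : (polarDeriv Q).IsRoot w) : (Q.roots.map fun ψ => ψ / (w - ψ)).sum = 0 := by
  have hroot : ∀ ψ ∈ Q.roots, w - ψ ≠ 0 := fun ψ hψ h => by
    rw [sub_eq_zero.1 h] at hQw
    exact hQw (mem_roots'.1 hψ).2
  have hsum : (Q.roots.map fun ψ => ψ / (w - ψ)).sum
      = w * (Q.roots.map fun ψ => 1 / (w - ψ)).sum - Q.natDegree := by
    have hcard : (Q.natDegree : ℂ) = (Q.roots.map fun _ => (1 : ℂ)).sum := by
      simp [IsAlgClosed.card_roots_eq_natDegree]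
    rw [hcard, ← Multiset.sum_map_mul_left, ← Multiset.sum_map_sub]
    refine congrArg Multiset.sum (Multiset.map_congr rfl fun ψ hψ => ?_)
    field_simp [hroot ψ hψ]
    ring
  rw [IsRoot, polarDeriv, eval_sub, eval_mul, eval_mul, eval_C, eval_X,
    (IsAlgClosed.splits Q).eval_derivative_eq_eval_mul_sum hQw] at hw
  rw [hsum]
  apply mul_left_cancel₀ hQw
  linear_combination -hw

/-- Laguerre's theorem for the half-plane `Im ≥ b`: at a root `w` with `Im w < b` we would have
`Σ ψ / (w - ψ) = 0`, while `le_re_mul_div_sub` makes a fixed real-linear image of each term `≥ b`. -/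
theorem le_im_of_isRoot_polarDeriv {Q : ℂ[X]} {b : ℝ} {w : ℂ} (hb : 0 < b)
    (hQ : 0 < Q.natDegree) (hroots : ∀ ψ ∈ Q.roots, b ≤ ψ.im) (hw : (polarDeriv Q).IsRoot w) :
    b ≤ w.im := by
  by_contra! hwb
  have hQ0 : Q ≠ 0 := by rintro rfl; simp at hQ
  have hQw : Q.eval w ≠ 0 := fun h => hwb.not_ge (hroots w ((mem_roots hQ0).2 h))
  have hle := Multiset.card_nsmul_le_sum (s := Q.roots.map fun ψ =>
      ((w.im - 2 * b - w.re * I) * (ψ / (w - ψ))).re) (a := b) fun x hx => by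
    obtain ⟨ψ, hψ, rfl⟩ := Multiset.mem_map.1 hx
    exact le_re_mul_div_sub hwb.le (hroots ψ hψ) fun h => hQw (h ▸ (mem_roots hQ0).1 hψ)
  have hzero : (Q.roots.map fun ψ => ((w.im - 2 * b - w.re * I) * (ψ / (w - ψ))).re).sum = 0 := by
    have h : (Q.roots.map fun ψ => ((w.im - 2 * b - w.re * I) * (ψ / (w - ψ))).re).sum
        = reAddGroupHom ((w.im - 2 * b - w.re * I) * (Q.roots.map fun ψ => ψ / (w - ψ)).sum) := by
      rw [← Multiset.sum_map_mul_left, map_multiset_sum, Multiset.map_map]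
      rfl
    rw [h, sum_div_sub_eq_zero_of_isRoot_polarDeriv hQw hw, mul_zero, map_zero]
  rw [hzero, Multiset.card_map, IsAlgClosed.card_roots_eq_natDegree, nsmul_eq_mul] at hle
  have : (0 : ℝ) < Q.natDegree * b := by positivity
  linarith

theorem sum_ne_zero_of_forall_le_im {s : Multiset ℂ} {b : ℝ} (hb : 0 < b) (hs : s ≠ 0)
    (h : ∀ ψ ∈ s, b ≤ ψ.im) : s.sum ≠ 0 := by
  intro hsum
  have hle := Multiset.card_nsmul_le_sum (s := s.map im) (a := b) (by simpa using h)
  have him : (s.map im).sum = 0 := by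
    have h := map_multiset_sum imAddGroupHom s
    rw [hsum, map_zero] at h
    exact h.symm
  rw [him, Multiset.card_map, nsmul_eq_mul] at hle
  have : (0 : ℝ) < Multiset.card s := by exact_mod_cast Multiset.card_pos.2 hs
  nlinarith

theorem lowCoeffForm_ne_zero {Λ M N : ℂ} {b : ℝ} (hb : 0 < b)
    (hsymbol : ∀ x y : ℂ, b ≤ x.im → b ≤ y.im → Λ * x * y + M * (x + y) + N ≠ 0)
    {Q : ℂ[X]} (hQ : 2 ≤ Q.natDegree) (hroots : ∀ ψ ∈ Q.roots, b ≤ ψ.im) :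
    lowCoeffForm Λ M N Q ≠ 0 := by
  obtain ⟨m, hm, hQm⟩ : ∃ m, 2 ≤ m ∧ Q.natDegree = m := ⟨_, hQ, rfl⟩
  clear hQ
  induction m, hm using Nat.le_induction generalizing Q with
  | base =>
    have hQ0 : Q ≠ 0 := by rintro rfl; simp at hQm
    obtain ⟨x, y, hxy⟩ := Multiset.card_eq_two.1 (IsAlgClosed.card_roots_eq_natDegree.trans hQm)
    rw [lowCoeffForm_of_roots_eq_pair Λ M N hQm hxy]
    exact mul_ne_zero (mul_ne_zero two_ne_zero (leadingCoeff_ne_zero.2 hQ0))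
      (hsymbol x y (hroots x (by simp [hxy])) (hroots y (by simp [hxy])))
  | succ m hm ih =>
    have hQ0 : Q ≠ 0 := by rintro rfl; simp at hQm
    have hcoeff : Q.coeff m ≠ 0 := by
      have hnext := (IsAlgClosed.splits Q).nextCoeff_eq_neg_sum_roots_mul_leadingCoeff
      rw [nextCoeff_of_natDegree_pos (by omega), hQm, Nat.add_sub_cancel] at hnext
      rw [hnext]
      refine mul_ne_zero (neg_ne_zero.2 (leadingCoeff_ne_zero.2 hQ0))
        (sum_ne_zero_of_forall_le_im hb ?_ hroots)
      rw [← Multiset.card_pos, IsAlgClosed.card_roots_eq_natDegree]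
      omega
    have hpolar := ih (fun ψ hψ =>
      le_im_of_isRoot_polarDeriv hb (by omega) hroots (isRoot_of_mem_roots hψ))
      (natDegree_polarDeriv hQm hcoeff)
    rw [lowCoeffForm_polarDeriv Λ M N hQm hcoeff] at hpolar
    exact right_ne_zero_of_mul hpolar

end Laguerre

section DegreeTwo

theorem re_mul_add_two_mul_im_mul_im_le_norm_mul (φ ψ : ℂ) :
    (φ * ψ).re + 2 * (φ.im * ψ.im) ≤ ‖φ * ψ‖ := by
  have h := re_le_norm (φ * conj ψ)
  simp only [norm_mul, norm_conj, mul_re, conj_re, conj_im] at h ⊢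
  linarith

theorem bilinearSymbol_ne_zero {κ M N : ℝ} (hκ : 0 ≤ κ) (hM : 0 < M) (hN : 0 ≤ N)
    (hκN : κ * N ≤ M ^ 2) {z x y : ℂ} (hz : 0 < z.im) (hx : z.im ≤ x.im) (hy : z.im ≤ y.im) :
    κ * x * y + M * z * (x + y) + N * (z ^ 2 - 1) ≠ 0 := by
  intro h
  rcases hκ.eq_or_lt with rfl | hκ
  · -- the imaginary part of `conj z` times the left side is positive
    have him := congrArg (fun w => (conj z * w).im) h
    simp only [mul_im, mul_re, conj_re, conj_im, add_re, add_im, sub_re, sub_im, ofReal_re,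
      ofReal_im, pow_two, one_re, one_im, zero_re, zero_im] at him
    have hpos : 0 < M * (z.re ^ 2 + z.im ^ 2) * (x.im + y.im)
        + N * z.im * (z.re ^ 2 + z.im ^ 2 + 1) := by
      have : 0 < x.im + y.im := by linarith
      positivity
    linarith
  · -- `φ = κ x + M z` and `ψ = κ y + M z` have `φ ψ = K z² + κ N`, so
    -- `2 Im φ Im ψ ≤ |φ ψ| - Re (φ ψ) ≤ 2 K (Im z)²`, which is smaller than `2 ((κ + M) Im z)²`
    set K := M ^ 2 - κ * N
    have hK : 0 ≤ K := sub_nonneg.2 hκN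
    have hprod : (κ * x + M * z) * (κ * y + M * z) = (K : ℂ) * z ^ 2 + (κ * N : ℝ) := by
      push_cast [K]
      linear_combination κ * h
    have hnorm : ‖(K : ℂ) * z ^ 2 + (κ * N : ℝ)‖ ≤ K * (z.re ^ 2 + z.im ^ 2) + κ * N := by
      refine (norm_add_le _ _).trans_eq ?_
      rw [norm_mul, norm_pow, norm_real, norm_real, Real.norm_of_nonneg hK,
        Real.norm_of_nonneg (by positivity), Complex.sq_norm, normSq_apply]
      ring
    have hre : ((K : ℂ) * z ^ 2 + (κ * N : ℝ)).re = K * (z.re ^ 2 - z.im ^ 2) + κ * N := by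
      rw [add_re, re_ofReal_mul, ofReal_re, sq, mul_re]
      ring
    have key := re_mul_add_two_mul_im_mul_im_le_norm_mul (κ * x + M * z) (κ * y + M * z)
    rw [hprod, hre] at key
    simp only [add_im, im_ofReal_mul] at key
    have hpos : 0 < (κ + M) * z.im := by positivity
    have hx' : (κ + M) * z.im ≤ κ * x.im + M * z.im := by nlinarith
    have hy' : (κ + M) * z.im ≤ κ * y.im + M * z.im := by nlinarith
    have hxy := mul_le_mul hx' hy' hpos.le (hpos.le.trans hx')
    have hfin : ((κ + M) * z.im) ^ 2 ≤ (M ^ 2 - κ * N) * z.im ^ 2 := by linarith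
    nlinarith [mul_pos (mul_pos hκ hM) (pow_pos hz 2), mul_pos (pow_pos hκ 2) (pow_pos hz 2),
      mul_nonneg (mul_nonneg hκ.le hN) (sq_nonneg z.im)]

end DegreeTwo

section Hyperbolic

theorem hyperbolic_of_forall_im_neg {q : ℝ[X]} (h : ∀ z : ℂ, z.im < 0 → aeval z q ≠ 0) :
    Hyperbolic q := by
  refine Or.inr fun z hz => ?_
  by_contra hne
  rcases lt_or_gt_of_ne hne with hneg | hpos
  · exact h z hneg hz
  · refine h (conj z) (by rwa [conj_im, neg_lt_zero]) ?_
    rw [aeval_conj, hz, map_zero]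

theorem hyperbolic_of_natDegree_le_one {q : ℝ[X]} (hq : q.natDegree ≤ 1) : Hyperbolic q := by
  by_cases hq0 : q = 0
  · exact Or.inl hq0
  have hlin := eq_X_add_C_of_natDegree_le_one hq
  refine hyperbolic_of_forall_im_neg fun z hz hroot => hq0 ?_
  rw [hlin, map_add, map_mul, aeval_C, aeval_C, aeval_X] at hroot
  have h1 : q.coeff 1 = 0 := by simpa [hz.ne] using congrArg im hroot
  have h0 : q.coeff 0 = 0 := by simpa [h1] using congrArg re hroot
  rw [hlin, h1, h0, C_0, zero_mul, add_zero]

theorem natDegree_gegenbauerOp_le_one (μ κ : ℝ) {p : ℝ[X]} (hp : p.natDegree ≤ 1) :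
    (gegenbauerOp μ κ p).natDegree ≤ 1 := by
  rw [gegenbauerOp, eq_X_add_C_of_natDegree_le_one hp]
  simp only [derivative_add, derivative_mul, derivative_C, derivative_X, zero_mul, zero_add,
    mul_one, mul_zero, add_zero]
  compute_degree

theorem aeval_gegenbauerOp (μ κ : ℝ) (p : ℝ[X]) (z : ℂ) :
    aeval z (gegenbauerOp μ κ p)
      = (z ^ 2 - 1) * (derivative (derivative (p.map (algebraMap ℝ ℂ)))).eval z
        + 2 * μ * z * (derivative (p.map (algebraMap ℝ ℂ))).eval z
        + κ * (p.map (algebraMap ℝ ℂ)).eval z := by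
  simp only [gegenbauerOp, aeval_def, eval₂_eq_eval_map, Polynomial.map_add, Polynomial.map_mul,
    Polynomial.map_sub, Polynomial.map_pow, map_X, Polynomial.map_one, map_C, derivative_map,
    eval_add, eval_mul, eval_sub, eval_pow, eval_X, eval_one, eval_C, Complex.coe_algebraMap]
  push_cast
  ring

theorem aeval_gegenbauerOp_ne_zero {μ κ : ℝ} (hμ : 0 < μ) (hκ : 0 ≤ κ) (hκμ : κ ≤ μ ^ 2)
    {p : ℝ[X]} (hp : 2 ≤ p.natDegree) (hroots : ∀ z : ℂ, aeval z p = 0 → z.im = 0)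
    {z : ℂ} (hz : z.im < 0) : aeval z (gegenbauerOp μ κ p) ≠ 0 := by
  set P := p.map (algebraMap ℝ ℂ)
  set d := p.natDegree
  have hPd : P.natDegree = d := natDegree_map _
  have hd : (2 : ℝ) ≤ d := by exact_mod_cast hp
  have htaylor : ∀ ψ ∈ (taylor z P).roots, (-z).im ≤ ψ.im := by
    intro ψ hψ
    have hroot : aeval (ψ + z) p = 0 := by
      rw [aeval_def, eval₂_eq_eval_map, ← taylor_eval]
      exact (mem_roots'.1 hψ).2
    have := hroots _ hroot
    rw [add_im] at this
    rw [neg_im]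
    linarith
  have hsymbol : ∀ x y : ℂ, (-z).im ≤ x.im → (-z).im ≤ y.im →
      κ * x * y + (-(μ * d * z)) * (x + y) + d * (d - 1) * (z ^ 2 - 1) ≠ 0 := by
    intro x y hx hy
    have hdd : 0 ≤ (d : ℝ) * (d - 1) := by nlinarith
    have := bilinearSymbol_ne_zero hκ (M := μ * d) (N := d * (d - 1)) (by positivity) hdd
      (by nlinarith [mul_le_mul_of_nonneg_right hκμ hdd]) (by rw [neg_im]; linarith) hx hy
    push_cast at this
    convert this using 2 <;> ring
  have hform := lowCoeffForm_ne_zero (by rw [neg_im]; linarith) hsymbol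
    (by rwa [natDegree_taylor, hPd]) htaylor
  rw [lowCoeffForm_taylor, hPd] at hform
  rw [aeval_gegenbauerOp]
  intro h
  apply hform
  linear_combination (d * (d - 1) : ℂ) * h

theorem hyperbolic_gegenbauerOp {μ κ : ℝ} (hμ : 0 < μ) (hκ : 0 ≤ κ) (hκμ : κ ≤ μ ^ 2)
    {p : ℝ[X]} (hp : Hyperbolic p) : Hyperbolic (gegenbauerOp μ κ p) := by
  rcases le_or_gt p.natDegree 1 with hdeg | hdeg
  · exact hyperbolic_of_natDegree_le_one (natDegree_gegenbauerOp_le_one μ κ hdeg)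
  · rcases hp with rfl | hroots
    · simp at hdeg
    · exact hyperbolic_of_forall_im_neg fun z hz =>
        aeval_gegenbauerOp_ne_zero hμ hκ hκμ hdeg hroots hz

end Hyperbolic

theorem stmt16_general (n : ℕ) (A : ℝ)
    (hA1 : -((n : ℝ) + 1) ≤ A) (hA2 : A ≤ (n : ℝ) * (n + 1)) :
    ∀ p : Polynomial ℝ, Hyperbolic p →
      Hyperbolic
        ((X ^ 2 - 1) * Polynomial.derivative (Polynomial.derivative p) +
          Polynomial.C (2 * ((n : ℝ) + 1)) * X * Polynomial.derivative p +
          Polynomial.C ((n : ℝ) ^ 2 + n - A) * p) :=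
  fun _ hp => hyperbolic_gegenbauerOp (by positivity) (by nlinarith) (by nlinarith) hp

theorem stmt16 (n : ℕ) (hn : 0 < n) (A : ℝ)
    (hA1 : -((n : ℝ) + 1) ≤ A) (hA2 : A ≤ (n : ℝ) * (n + 1)) :
    ∀ p : Polynomial ℝ, Hyperbolic p →
      Hyperbolic
        ((X ^ 2 - 1) * Polynomial.derivative (Polynomial.derivative p) +
          Polynomial.C (2 * ((n : ℝ) + 1)) * X * Polynomial.derivative p +
          Polynomial.C ((n : ℝ) ^ 2 + n - A) * p) :=
  stmt16_general n A hA1 hA2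
end
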